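/- arXiv:2509.02410 — 2 statements merged into one kernel-verified Lean document; each statement's English description precedes it below -/
import Mathlib

section
/- Let ε₁, ε₂ be independent Rademacher random variables and let W₂ be the set of pairs (a, b) of nonnegative reals with a² + b² = 1. Then sup over (a,b) ∈ W₂ of P(a ε₁ + b ε₂ ≥ t) equals 1/2 if 0 < t ≤ 1, equals 1/4 if 1 < t ≤ √2, and equals 0 if t > √2. -/
/-!
On the almost sure event that both signs are `±1`, the sum `a ε₀ + b ε₁` with `a, b ≥ 0` can only
reach a level `t > b - a` when `ε₀ = 1`. For `0 < t ≤ 1` this pins down the sign attached to the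
larger coefficient, so the probability is at most `1/2`, attained at `(a, b) = (1, 0)`; for
`1 < t` it pins down both signs, so the probability is at most `1/4`, attained at
`a = b = √2 / 2` as long as `t ≤ √2`. Finally `a + b ≤ √2` on the unit circle, so no level above
`√2` is ever reached.
-/

open MeasureTheory ProbabilityTheory Real

lemma eq_one_of_le_mul_add_mul {a b e e' t : ℝ} (he : e = 1 ∨ e = -1) (he' : e' ≤ 1)
    (hb : 0 ≤ b) (ht : b - a < t) (h : t ≤ a * e + b * e') : e = 1 := by
  rcases he with he | he
  · exact he
  · subst he; nlinarith

lemma mul_add_mul_le_sqrt_two {a b e e' : ℝ} (ha : 0 ≤ a) (hb : 0 ≤ b) (hab : a ^ 2 + b ^ 2 = 1)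
    (he : e ≤ 1) (he' : e' ≤ 1) : a * e + b * e' ≤ √2 := by
  have hsum : a + b ≤ √2 :=
    Real.le_sqrt_of_sq_le (by nlinarith [sq_nonneg (a - b)])
  nlinarith

lemma le_one_of_eq_one_or_eq_neg_one {e : ℝ} (he : e = 1 ∨ e = -1) : e ≤ 1 := by
  rcases he with rfl | rfl <;> norm_num

section Rademacher

variable {Ω : Type*} [MeasurableSpace Ω] {μ : Measure Ω} {X Y : Ω → ℝ} {a b t : ℝ}

lemma ae_eq_one_or_eq_neg_one [IsProbabilityMeasure μ] (hX : Measurable X)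
    (h₁ : μ {ω | X ω = 1} = 1 / 2) (h₂ : μ {ω | X ω = -1} = 1 / 2) :
    ∀ᵐ ω ∂μ, X ω = 1 ∨ X ω = -1 := by
  have hmeas₁ : MeasurableSet {ω | X ω = 1} := hX (measurableSet_singleton _)
  have hmeas₂ : MeasurableSet {ω | X ω = -1} := hX (measurableSet_singleton _)
  have hdisj : Disjoint {ω | X ω = 1} {ω | X ω = -1} :=
    Set.disjoint_left.2 fun ω (h : X ω = 1) (h' : X ω = -1) ↦ by linarith
  refine (ae_mem_iff_measure_eq (hmeas₁.union hmeas₂).nullMeasurableSet).2 ?_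
  rw [measure_union hdisj hmeas₂, h₁, h₂, measure_univ, ENNReal.add_halves]

lemma ProbabilityTheory.IndepFun.measure_eq_one_inter_eq_one (hXY : IndepFun X Y μ)
    (hX : μ {ω | X ω = 1} = 1 / 2) (hY : μ {ω | Y ω = 1} = 1 / 2) :
    μ ({ω | X ω = 1} ∩ {ω | Y ω = 1}) = 1 / 4 := by
  have h := hXY.measure_inter_preimage_eq_mul _ _ (measurableSet_singleton 1)
    (measurableSet_singleton 1)
  simp only [Set.preimage, Set.mem_singleton_iff, hX, hY] at h
  rw [h, one_div, ← ENNReal.mul_inv (by simp) (by simp)]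
  norm_num

variable (hX : ∀ᵐ ω ∂μ, X ω = 1 ∨ X ω = -1) (hY : ∀ᵐ ω ∂μ, Y ω = 1 ∨ Y ω = -1)
include hX hY

lemma measure_le_mul_add_mul_le_measure_eq_one (hb : 0 ≤ b) (ht : b - a < t) :
    μ {ω | t ≤ a * X ω + b * Y ω} ≤ μ {ω | X ω = 1} := by
  refine measure_mono_ae ?_
  filter_upwards [hX, hY] with ω hXω hYω (hω : t ≤ a * X ω + b * Y ω)
  exact eq_one_of_le_mul_add_mul hXω (le_one_of_eq_one_or_eq_neg_one hYω) hb ht hω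

lemma measure_le_mul_add_mul_le_measure_inter (ha : 0 ≤ a) (hb : 0 ≤ b) (hta : b - a < t)
    (htb : a - b < t) :
    μ {ω | t ≤ a * X ω + b * Y ω} ≤ μ ({ω | X ω = 1} ∩ {ω | Y ω = 1}) := by
  refine measure_mono_ae ?_
  filter_upwards [hX, hY] with ω hXω hYω (hω : t ≤ a * X ω + b * Y ω)
  exact ⟨eq_one_of_le_mul_add_mul hXω (le_one_of_eq_one_or_eq_neg_one hYω) hb hta hω,
    eq_one_of_le_mul_add_mul hYω (le_one_of_eq_one_or_eq_neg_one hXω) ha htb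
      (by rwa [add_comm] at hω)⟩

lemma measure_le_mul_add_mul_eq_zero (ha : 0 ≤ a) (hb : 0 ≤ b) (hab : a ^ 2 + b ^ 2 = 1)
    (ht : √2 < t) : μ {ω | t ≤ a * X ω + b * Y ω} = 0 := by
  rw [measure_eq_zero_iff_ae_notMem]
  filter_upwards [hX, hY] with ω hXω hYω (hω : t ≤ a * X ω + b * Y ω)
  exact ht.not_ge <| hω.trans <| mul_add_mul_le_sqrt_two ha hb hab
    (le_one_of_eq_one_or_eq_neg_one hXω) (le_one_of_eq_one_or_eq_neg_one hYω)

end Rademacher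

theorem stmt_6 {Ω : Type*} {m0 : MeasurableSpace Ω} (μ : Measure Ω) [IsProbabilityMeasure μ]
     (ε : Fin 2 → Ω → ℝ)
    (hmeas : ∀ i, Measurable (ε i))
    (hdist : ∀ i, μ {ω | ε i ω = 1} = 1/2 ∧ μ {ω | ε i ω = -1} = 1/2)
    (hindep : ProbabilityTheory.iIndepFun ε μ)
    (t : ℝ) :
    (0 < t → t ≤ 1 →
      (⨆ p ∈ {p : ℝ × ℝ | 0 ≤ p.1 ∧ 0 ≤ p.2 ∧ p.1 ^ 2 + p.2 ^ 2 = 1},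
        μ {ω | t ≤ p.1 * ε 0 ω + p.2 * ε 1 ω}) = 1/2) ∧
    (1 < t → t ≤ Real.sqrt 2 →
      (⨆ p ∈ {p : ℝ × ℝ | 0 ≤ p.1 ∧ 0 ≤ p.2 ∧ p.1 ^ 2 + p.2 ^ 2 = 1},
        μ {ω | t ≤ p.1 * ε 0 ω + p.2 * ε 1 ω}) = 1/4) ∧
    (Real.sqrt 2 < t →
      (⨆ p ∈ {p : ℝ × ℝ | 0 ≤ p.1 ∧ 0 ≤ p.2 ∧ p.1 ^ 2 + p.2 ^ 2 = 1},
        μ {ω | t ≤ p.1 * ε 0 ω + p.2 * ε 1 ω}) = 0) := by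
  have hε i := ae_eq_one_or_eq_neg_one (hmeas i) (hdist i).1 (hdist i).2
  have hboth := (hindep.indepFun (show (0 : Fin 2) ≠ 1 by decide)).measure_eq_one_inter_eq_one
    (hdist 0).1 (hdist 1).1
  refine ⟨fun ht₀ ht₁ ↦ le_antisymm ?_ ?_, fun ht₁ ht₂ ↦ le_antisymm ?_ ?_, fun ht ↦ ?_⟩
  · refine iSup₂_le fun ⟨a, b⟩ ⟨ha, hb, _⟩ ↦ ?_
    rcases le_total b a with hba | hab
    · exact (measure_le_mul_add_mul_le_measure_eq_one (hε 0) (hε 1) hb (by linarith)).trans_eq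
        (hdist 0).1
    · simp_rw [add_comm (a * _)]
      exact (measure_le_mul_add_mul_le_measure_eq_one (hε 1) (hε 0) ha (by linarith)).trans_eq
        (hdist 1).1
  · refine le_iSup₂_of_le (1, 0) (by norm_num) ((hdist 0).1.symm.trans_le (measure_mono ?_))
    intro ω (h : ε 0 ω = 1)
    simp [h, ht₁]
  · refine iSup₂_le fun ⟨a, b⟩ ⟨ha, hb, hab⟩ ↦ ?_
    exact (measure_le_mul_add_mul_le_measure_inter (hε 0) (hε 1) ha hb (by nlinarith)
      (by nlinarith)).trans_eq hboth
  · have hmem : (√2 / 2, √2 / 2) ∈ {p : ℝ × ℝ | 0 ≤ p.1 ∧ 0 ≤ p.2 ∧ p.1 ^ 2 + p.2 ^ 2 = 1} :=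
      ⟨by positivity, by positivity, by rw [div_pow, sq_sqrt zero_le_two]; norm_num⟩
    refine le_iSup₂_of_le _ hmem (hboth.symm.trans_le (measure_mono ?_))
    rintro ω ⟨h₀ : ε 0 ω = 1, h₁ : ε 1 ω = 1⟩
    simp only [Set.mem_ofPred_eq, h₀, h₁]
    linarith
  · exact le_antisymm (iSup₂_le fun ⟨a, b⟩ ⟨ha, hb, hab⟩ ↦
      (measure_le_mul_add_mul_eq_zero (hε 0) (hε 1) ha hb hab ht).le) (by positivity)
end

section
/- For n = 2 and every t > 0, the supremum over w ∈ W₂ of P(S₂(w) ≥ t) is attained and equals max(P(S₂(w^(1)) ≥ t), P(S₂(w^(2)) ≥ t)), where w^(1) = (1, 0) and w^(2) = (1/√2, 1/√2). -/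
/-!
Independence makes the joint law of `(ε₀, ε₁)` the uniform measure on the four sign patterns,
so `P(w₀ε₀ + w₁ε₁ ≥ t)` is a quarter of the number of patterns `s` with `t ≤ w₀s₀ + w₁s₁`.
For `t > 0` the pattern `(-1,-1)` never counts and `(1,-1)`, `(-1,1)` never count together.
If one of them counts then `t ≤ |w₀ - w₁| ≤ 1`, and at most two patterns count, as for
`w = (1, 0)`. Otherwise only `(1,1)` can count, and it does so only if `t ≤ w₀ + w₁ ≤ √2`,
as for `w = (1/√2, 1/√2)`.
-/

open MeasureTheory Real Finset
open scoped ENNReal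

noncomputable def rademacher : Measure ℝ :=
  (1 / 2 : ℝ≥0∞) • Measure.dirac 1 + (1 / 2 : ℝ≥0∞) • Measure.dirac (-1)

lemma rademacher_prod_apply {S : Set (ℝ × ℝ)} (hS : MeasurableSet S) [DecidablePred (· ∈ S)] :
    (rademacher.prod rademacher) S = #{s ∈ ({1, -1} : Finset ℝ) ×ˢ {1, -1} | s ∈ S} / 4 := by
  simp only [rademacher, Measure.add_prod, Measure.prod_add, Measure.prod_smul_left,
    Measure.prod_smul_right, Measure.dirac_prod_dirac, Measure.add_apply,
    Measure.smul_apply, Measure.dirac_apply' _ hS, smul_eq_mul]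
  rw [card_filter, sum_product, sum_pair (by norm_num), sum_pair (by norm_num),
    sum_pair (by norm_num)]
  simp only [Set.indicator_apply, Pi.one_apply]
  have hquarter : (2⁻¹ * 2⁻¹ : ℝ≥0∞) = 4⁻¹ := by
    rw [← ENNReal.mul_inv (by norm_num) (by norm_num)]; norm_num
  push_cast
  simp only [div_eq_mul_inv, ← hquarter]
  ring

noncomputable def tailCount (t a b : ℝ) : ℕ :=
  #{s ∈ ({1, -1} : Finset ℝ) ×ˢ {1, -1} | t ≤ a * s.1 + b * s.2}

section Law

variable {Ω : Type*} {m0 : MeasurableSpace Ω} {μ : Measure Ω}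

lemma map_eq_rademacher [IsProbabilityMeasure μ] {X : Ω → ℝ} (hX : Measurable X)
    (h1 : μ {ω | X ω = 1} = 1 / 2) (h2 : μ {ω | X ω = -1} = 1 / 2) :
    μ.map X = rademacher := by
  have hsign : ∀ᵐ ω ∂μ, X ω = 1 ∨ X ω = -1 := by
    have hdisj : Disjoint {ω | X ω = 1} {ω | X ω = -1} :=
      Set.disjoint_left.mpr fun ω h h' => by norm_num [h.out] at h'
    rw [ae_iff_measure_eq, Set.ofPred_or, measure_union hdisj, h1, h2, ENNReal.add_halves,
      measure_univ]
    · exact measurableSet_eq_fun hX measurable_const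
    · exact (measurableSet_eq_fun hX measurable_const).union
        (measurableSet_eq_fun hX measurable_const) |>.nullMeasurableSet
  rw [(Measure.ae_eq_or_eq_iff_map_eq_dirac_add_dirac hX.aemeasurable (by norm_num)).mp hsign]
  simp only [Set.preimage, Set.mem_singleton_iff, h1, h2, rademacher]

lemma measure_le_add_eq_tailCount [IsFiniteMeasure μ] {X Y : Ω → ℝ} (hX : Measurable X)
    (hY : Measurable Y) (hXY : ProbabilityTheory.IndepFun X Y μ)
    (hXlaw : μ.map X = rademacher) (hYlaw : μ.map Y = rademacher) (t a b : ℝ) :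
    μ {ω | t ≤ a * X ω + b * Y ω} = tailCount t a b / 4 := by
  have hS : MeasurableSet {p : ℝ × ℝ | t ≤ a * p.1 + b * p.2} :=
    measurableSet_le measurable_const (by fun_prop)
  calc μ {ω | t ≤ a * X ω + b * Y ω}
      = μ.map (fun ω => (X ω, Y ω)) {p | t ≤ a * p.1 + b * p.2} :=
        (Measure.map_apply (hX.prodMk hY) hS).symm
    _ = (rademacher.prod rademacher) {p | t ≤ a * p.1 + b * p.2} := by
        rw [hXY.map_prod_eq_prod_map_map hX.aemeasurable hY.aemeasurable, hXlaw, hYlaw]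
    _ = tailCount t a b / 4 := rademacher_prod_apply hS

end Law

lemma tailCount_eq (t a b : ℝ) :
    tailCount t a b = (if t ≤ a + b then 1 else 0) + (if t ≤ a - b then 1 else 0) +
      ((if t ≤ -a + b then 1 else 0) + (if t ≤ -a - b then 1 else 0)) := by
  rw [tailCount, card_filter, sum_product, sum_pair (by norm_num), sum_pair (by norm_num),
    sum_pair (by norm_num)]
  simp only [mul_one, mul_neg_one, ← sub_eq_add_neg]

lemma tailCount_one_zero {t : ℝ} (ht : 0 < t) : tailCount t 1 0 = if t ≤ 1 then 2 else 0 := by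
  rw [tailCount_eq]
  split_ifs <;> first | omega | linarith

lemma tailCount_diag {t c : ℝ} (ht : 0 < t) (hc : 0 ≤ c) :
    tailCount t c c = if t ≤ 2 * c then 1 else 0 := by
  rw [tailCount_eq]
  split_ifs <;> first | omega | linarith

lemma tailCount_le_max {t a b : ℝ} (ht : 0 < t) (ha : 0 ≤ a) (hb : 0 ≤ b)
    (hab : a ^ 2 + b ^ 2 = 1) :
    tailCount t a b ≤ max (tailCount t 1 0) (tailCount t (1 / √2) (1 / √2)) := by
  have hsqrt : 2 * (1 / √2) = √2 := by field_simp; simp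
  rw [tailCount_one_zero ht, tailCount_diag ht (by positivity), hsqrt, tailCount_eq]
  have hsum : a + b ≤ √2 := by
    nlinarith [sq_nonneg (a - b), sq_sqrt (show (0 : ℝ) ≤ 2 by norm_num), sqrt_nonneg 2]
  have ha1 : a ≤ 1 := by nlinarith
  have hb1 : b ≤ 1 := by nlinarith
  split_ifs <;> first | omega | linarith

theorem stmt_7 {Ω : Type*} {m0 : MeasurableSpace Ω} (μ : Measure Ω) [IsProbabilityMeasure μ]
     (ε : Fin 2 → Ω → ℝ)
    (hmeas : ∀ i, Measurable (ε i))
    (hdist : ∀ i, μ {ω | ε i ω = 1} = 1/2 ∧ μ {ω | ε i ω = -1} = 1/2)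
    (hindep : ProbabilityTheory.iIndepFun ε μ)
    (t : ℝ) (ht : 0 < t) :
    IsGreatest ((fun w : Fin 2 → ℝ => μ {ω | t ≤ ∑ j, w j * ε j ω}) ''
        {w | (∀ j, 0 ≤ w j) ∧ ∑ j, w j ^ 2 = 1})
      (max (μ {ω | t ≤ ε 0 ω})
        (μ {ω | t ≤ (1 / Real.sqrt 2) * ε 0 ω + (1 / Real.sqrt 2) * ε 1 ω})) := by
  have hlaw (i : Fin 2) : μ.map (ε i) = rademacher :=
    map_eq_rademacher (hmeas i) (hdist i).1 (hdist i).2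
  have hP (a b : ℝ) : μ {ω | t ≤ a * ε 0 ω + b * ε 1 ω} = tailCount t a b / 4 :=
    measure_le_add_eq_tailCount (hmeas 0) (hmeas 1) (hindep.indepFun zero_ne_one) (hlaw 0)
      (hlaw 1) t a b
  have hP₁ : μ {ω | t ≤ ε 0 ω} = tailCount t 1 0 / 4 := by simpa using hP 1 0
  constructor
  · rcases max_choice (μ {ω | t ≤ ε 0 ω})
      (μ {ω | t ≤ (1 / √2) * ε 0 ω + (1 / √2) * ε 1 ω}) with h | h <;> rw [h]
    · exact ⟨![1, 0], by simp [Fin.forall_fin_two], by simp⟩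
    · refine ⟨![1 / √2, 1 / √2], ⟨by simp [Fin.forall_fin_two], ?_⟩, by simp⟩
      norm_num [Fin.sum_univ_two]
  · rintro _ ⟨w, ⟨hw0, hw1⟩, rfl⟩
    simp only [Fin.sum_univ_two] at hw1 ⊢
    rw [hP, hP₁, hP, ← (show Monotone fun n : ℕ => (n : ℝ≥0∞) / 4 from
      fun _ _ h => ENNReal.div_le_div_right (by exact_mod_cast h) 4).map_max]
    gcongr
    exact tailCount_le_max ht (hw0 0) (hw0 1) hw1
end
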